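/- Let G be a simple graph, T a set of vertices of G (terminals), and let G' be the graph obtained from G by adding one new vertex s adjacent exactly to all vertices of T. Then for every set X of vertices of G (so s ∉ X), the following are equivalent: (i) no path in G − X connects two distinct vertices of T ∖ X; (ii) no cycle of G' − X contains the vertex s (i.e., X is a subset feedback vertex set of (G', {s}) ). -/

import Mathlib

/-!
A vertex `v` lies on a cycle iff it has two distinct neighbours joined by a walk avoiding `v`.
In `G'` the neighbours of `s` are the terminals and the walks avoiding `s` are the walks of `G`,
so `s` lies on a cycle of `G'` iff two distinct terminals are connected in `G`. Deleting `X`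
from `G'` gives the graph obtained from `G − X` by adding `s` adjacent to `T ∖ X`.
-/

/-- The graph `G'` obtained from `G` by adding one new vertex `s = Sum.inr ()` adjacent exactly
to all vertices of `T`. -/
def GplusS {V : Type*} (G : SimpleGraph V) (T : Set V) : SimpleGraph (V ⊕ Unit) :=
  SimpleGraph.fromRel fun a b =>
    match a, b with
    | Sum.inl u, Sum.inl v => G.Adj u v
    | Sum.inl u, Sum.inr _ => u ∈ T
    | _, _ => False

namespace SimpleGraph

variable {V W : Type*} {G : SimpleGraph V} {G' : SimpleGraph W} {v : V}

def LiesOnCycle (G : SimpleGraph V) (v : V) : Prop :=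
  ∃ (u : V) (c : G.Walk u u), c.IsCycle ∧ v ∈ c.support

theorem liesOnCycle_iff_exists_walk_avoiding :
    G.LiesOnCycle v ↔
      ∃ x y, G.Adj v x ∧ G.Adj y v ∧ x ≠ y ∧ ∃ q : G.Walk x y, v ∉ q.support := by
  classical
  constructor
  · rintro ⟨u, c, hc, hv⟩
    obtain ⟨c, hc⟩ : ∃ c : G.Walk v v, c.IsCycle := ⟨_, hc.rotate hv⟩
    cases c with
    | nil => exact (Walk.not_isCycle_nil hc).elim
    | @cons _ x _ hvx p =>
      obtain ⟨hp, he⟩ := (Walk.cons_isCycle_iff p hvx).1 hc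
      have hpn : ¬ p.Nil := fun h => hvx.ne h.eq.symm
      refine ⟨x, p.penultimate, hvx, p.adj_penultimate hpn, fun hx => ?_, p.dropLast, ?_⟩
      · have := p.mk_penultimate_end_mem_edges hpn
        rw [← hx, Sym2.eq_swap] at this
        exact he this
      · have := hp.support_nodup
        rw [← Walk.support_dropLast_concat hpn, List.nodup_append] at this
        exact fun h => this.2.2 v h v (List.mem_singleton_self v) rfl
  · rintro ⟨x, y, hvx, hyv, hxy, q, hq⟩
    have hp : v ∉ q.toPath.val.support := fun h => hq (q.support_toPath_subset_support h)
    refine ⟨v, .cons hvx (q.toPath.val.concat hyv), ?_, Walk.start_mem_support _⟩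
    refine Path.cons_isCycle ⟨_, q.toPath.2.concat hp hyv⟩ hvx ?_
    simp only [Walk.edges_concat, List.concat_eq_append, List.mem_append, List.mem_singleton,
      Sym2.eq_iff, not_or]
    exact ⟨fun h => hp (Walk.fst_mem_support_of_mem_edges _ h),
      fun h => hvx.ne h.2.symm, fun h => hxy h.2⟩

theorem LiesOnCycle.map (f : G ↪g G') (h : G.LiesOnCycle v) : G'.LiesOnCycle (f v) := by
  obtain ⟨u, c, hc, hv⟩ := h
  exact ⟨f u, c.map f.toHom, hc.map f.injective,
    Walk.support_map f.toHom c ▸ List.mem_map_of_mem hv⟩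

theorem Iso.liesOnCycle_iff (φ : G ≃g G') : G'.LiesOnCycle (φ v) ↔ G.LiesOnCycle v :=
  ⟨fun h => by simpa using h.map φ.symm.toEmbedding, LiesOnCycle.map φ.toEmbedding⟩

end SimpleGraph

namespace GplusS

open SimpleGraph

variable {V : Type*} {G : SimpleGraph V} {T : Set V}

@[simp]
lemma adj_inl_inl {u v : V} : (GplusS G T).Adj (.inl u) (.inl v) ↔ G.Adj u v := by
  simp only [GplusS, fromRel_adj, ne_eq, Sum.inl.injEq]
  exact ⟨fun h => h.2.elim id Adj.symm, fun h => ⟨h.ne, .inl h⟩⟩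

@[simp]
lemma adj_inl_inr {u : V} {x : Unit} : (GplusS G T).Adj (.inl u) (.inr x) ↔ u ∈ T := by
  simp [GplusS]

@[simp]
lemma adj_inr_inl {u : V} {x : Unit} : (GplusS G T).Adj (.inr x) (.inl u) ↔ u ∈ T := by
  simp [GplusS]

lemma inr_adj_iff {x : V ⊕ Unit} : (GplusS G T).Adj (.inr ()) x ↔ ∃ a ∈ T, x = .inl a := by
  cases x <;> simp

def inlEmbedding : G ↪g GplusS G T := ⟨Function.Embedding.inl, adj_inl_inl⟩

@[simp]
lemma inlEmbedding_apply (v : V) : (inlEmbedding : G ↪g GplusS G T) v = .inl v := rfl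

lemma reachable_iff_exists_walk_avoiding_inr {a b : V} :
    G.Reachable a b ↔ ∃ q : (GplusS G T).Walk (.inl a) (.inl b), .inr () ∉ q.support := by
  constructor
  · rintro ⟨p⟩
    have hp : .inr () ∉ (p.map (inlEmbedding (T := T)).toHom).support := by
      rw [Walk.support_map]; simp
    exact ⟨_, hp⟩
  · rintro ⟨q, hq⟩
    have hrange : ∀ x ∈ q.support, x ∈ Set.range (Sum.inl : V → V ⊕ Unit) := by
      rintro (x | ⟨⟩) hx
      · exact ⟨x, rfl⟩
      · exact absurd hx hq
    exact (Iso.reachable_iff (φ := inlEmbedding.isoInduceRange)).1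
      (q.induce _ hrange).reachable

theorem liesOnCycle_inr_iff :
    (GplusS G T).LiesOnCycle (.inr ()) ↔ ∃ a ∈ T, ∃ b ∈ T, a ≠ b ∧ G.Reachable a b := by
  rw [liesOnCycle_iff_exists_walk_avoiding]
  constructor
  · rintro ⟨_, _, hx, hy, hxy, q, hq⟩
    obtain ⟨a, ha, rfl⟩ := inr_adj_iff.1 hx
    obtain ⟨b, hb, rfl⟩ := inr_adj_iff.1 hy.symm
    exact ⟨a, ha, b, hb, fun h => hxy (h ▸ rfl), reachable_iff_exists_walk_avoiding_inr.2 ⟨q, hq⟩⟩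
  · rintro ⟨a, ha, b, hb, hab, hr⟩
    obtain ⟨q, hq⟩ := reachable_iff_exists_walk_avoiding_inr.1 hr
    exact ⟨_, _, adj_inr_inl.2 ha, adj_inl_inr.2 hb, by simpa, q, hq⟩

def induceComplIso (G : SimpleGraph V) (T X : Set V) :
    (GplusS G T).induce (Sum.inl '' X)ᶜ ≃g GplusS (G.induce Xᶜ) (Subtype.val ⁻¹' T) where
  toFun
    | ⟨.inl v, h⟩ => .inl ⟨v, fun hv => h ⟨v, hv, rfl⟩⟩
    | ⟨.inr x, _⟩ => .inr x
  invFun := Sum.elim (fun v => ⟨.inl v, fun ⟨u, hu, h⟩ => v.2 (Sum.inl_injective h ▸ hu)⟩)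
    (fun x => ⟨.inr x, by simp⟩)
  left_inv := by rintro ⟨_ | _, _⟩ <;> rfl
  right_inv := by rintro (_ | _) <;> rfl
  map_rel_iff' := by rintro ⟨_ | _, _⟩ ⟨_ | _, _⟩ <;> simp

end GplusS

/-- For every set `X` of vertices of `G`, the following are equivalent:
(i) no path in `G − X` connects two distinct vertices of `T ∖ X`;
(ii) no cycle of `G' − X` contains the vertex `s`, where `G'` is obtained from `G` by adding a
new vertex `s` adjacent exactly to all vertices of `T` (i.e. `X` is a subset feedback vertex set
of `(G', {s})`). -/
theorem stmt16 {V : Type*} (G : SimpleGraph V) (T : Set V) (X : Set V) :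
    (∀ a b : ↥(Xᶜ : Set V), (a : V) ∈ T → (b : V) ∈ T → a ≠ b →
      ¬ (G.induce (Xᶜ : Set V)).Reachable a b) ↔
    (∀ (a : ↥((Sum.inl '' X : Set (V ⊕ Unit))ᶜ))
      (c : ((GplusS G T).induce (Sum.inl '' X : Set (V ⊕ Unit))ᶜ).Walk a a),
      c.IsCycle → ∀ b ∈ c.support, (b : V ⊕ Unit) ≠ Sum.inr ()) := by
  have key := (GplusS.induceComplIso G T X).liesOnCycle_iff (v := ⟨.inr (), by simp⟩)
  rw [show GplusS.induceComplIso G T X ⟨.inr (), _⟩ = .inr () from rfl,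
    GplusS.liesOnCycle_inr_iff, ← not_iff_not] at key
  convert key using 1
  · simp only [Set.mem_preimage, not_exists, not_and]
    exact ⟨fun h a ha b hb => h a b ha hb, fun h a b ha hb => h a ha b hb⟩
  · simp only [SimpleGraph.LiesOnCycle, not_exists, not_and]
    refine forall₂_congr fun a c => imp_congr_right fun _ => ?_
    exact ⟨fun h hs => h _ hs rfl, fun h ⟨b, _⟩ hb hbs => by subst hbs; exact h hb⟩
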